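/- Let k be a field and (C, Δ, ε) any counital coassociative k-coalgebra. Then for every n ≥ 0 the matching map σ : coTHH^n(C) = C^{⊗(n+1)} → M_n(coTHH^•(C)), y ↦ (σ_0(y),…,σ_{n-1}(y)), is surjective; in other words, the cosimplicial cyclic cobar construction of any counital coalgebra over a field has surjective matching maps (it is Reedy fibrant). -/

import Mathlib

/-!
If `ε e = 1`, inserting `e` as an extra tensor factor gives a section of a codegeneracy which
commutes with the codegeneracies further to the right. A matching family `(x_0, …, x_{n-1})` is
then lifted one coordinate at a time, from the last to the first: to correct coordinate `m`,
add to the current lift `y` the error `x_m - σ_m y` with `e` inserted at position `m + 1`. By the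
matching condition and the cosimplicial identities this error is killed by every `σ_j` with
`j > m`, so the coordinates already corrected are untouched. Over a field such an `e` exists
unless `ε = 0`, and then the counit law forces `C = 0`.
-/

open scoped TensorProduct

noncomputable section

namespace CoTHH

set_option linter.unusedSectionVars false

variable {k : Type*} [CommRing k] {C : Type*} [AddCommGroup C] [Module k C]

private lemma update_succAbove_self {n : ℕ} [DecidableEq (Fin (n + 1))] (c : Fin (n + 1) → C) (p : Fin (n + 1)) (v : C) :
    (fun j => Function.update c p v (p.succAbove j)) = fun j => c (p.succAbove j) := by
  funext j
  exact Function.update_of_ne (Fin.succAbove_ne p j) _ _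

private lemma update_succAbove_other {n : ℕ} [DecidableEq (Fin (n + 1))] [DecidableEq (Fin n)] (c : Fin (n + 1) → C) (p : Fin (n + 1))
    (j₀ : Fin n) (v : C) :
    (fun j => Function.update c (p.succAbove j₀) v (p.succAbove j)) =
      Function.update (fun j => c (p.succAbove j)) j₀ v := by
  funext j
  rcases eq_or_ne j j₀ with rfl | hj
  · simp
  · rw [Function.update_of_ne (Fin.succAbove_right_injective.ne hj),
      Function.update_of_ne hj]

/-- The codegeneracy-type operator on tensor powers: given a linear functional
`ε : C → k`, the map `id^{⊗p} ⊗ ε ⊗ id^{⊗(n-p)} : C^{⊗(n+1)} → C^{⊗n}` applying `ε`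
in the `p`-th tensor factor (and deleting that factor). -/
def epsAt (ε : C →ₗ[k] k) (n : ℕ) (p : Fin (n + 1)) :
    (⨂[k] (_ : Fin (n + 1)), C) →ₗ[k] ⨂[k] (_ : Fin n), C :=
  PiTensorProduct.lift
    { toFun := fun c => ε (c p) • PiTensorProduct.tprod k (fun j => c (p.succAbove j))
      map_update_add' := by
        intro _ c m x y
        try dsimp only
        rcases eq_or_ne m p with rfl | hmp
        · rw [update_succAbove_self, update_succAbove_self, update_succAbove_self]
          simp [add_smul]
        · obtain ⟨j₀, rfl⟩ := Fin.exists_succAbove_eq hmp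
          rw [update_succAbove_other, update_succAbove_other, update_succAbove_other]
          simp only [Function.update_of_ne (Fin.ne_succAbove p j₀)]
          rw [MultilinearMap.map_update_add, smul_add]
      map_update_smul' := by
        intro _ c m s x
        try dsimp only
        rcases eq_or_ne m p with rfl | hmp
        · rw [update_succAbove_self, update_succAbove_self]
          simp [mul_smul]
        · obtain ⟨j₀, rfl⟩ := Fin.exists_succAbove_eq hmp
          rw [update_succAbove_other, update_succAbove_other]
          simp only [Function.update_of_ne (Fin.ne_succAbove p j₀)]
          rw [MultilinearMap.map_update_smul, smul_comm] }

/-- The codegeneracy operators with uniform indexing: `epsAt' ε n p : C^{⊗n} → C^{⊗(n-1)}`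
applies `ε` in the `p`-th factor.  In particular `σ_i : C^{⊗(m+2)} → C^{⊗(m+1)}`
(the `i`-th codegeneracy `id^{⊗(i+1)} ⊗ ε ⊗ id^{⊗(m-i)}` of `coTHH^•(C)` at level `m+1`)
is `epsAt' ε (m+2) (i+1)`. -/
def epsAt' (ε : C →ₗ[k] k) : ∀ (n : ℕ), Fin n → ((⨂[k] (_ : Fin n), C) →ₗ[k] ⨂[k] (_ : Fin (n - 1)), C)
  | n + 1, p => epsAt ε n p

end CoTHH

open CoTHH


theorem Fin.removeNth_succAbove_insertNth {n : ℕ} {α : Type*} (p : Fin (n + 2))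
    (q : Fin (n + 1)) (a : α) (c : Fin (n + 1) → α) :
    (p.succAbove q).removeNth (p.insertNth (α := fun _ ↦ α) a c) =
      (q.predAbove p).insertNth (α := fun _ ↦ α) a (q.removeNth c) := by
  funext j
  cases j using Fin.succAboveCases (q.predAbove p) with
  | x => simp [Fin.removeNth, Fin.succAbove_succAbove_predAbove]
  | p j => simp [Fin.removeNth, Fin.succAbove_succAbove_succAbove_predAbove]

theorem Fin.castSucc_succ_succAbove_of_castSucc_lt {n : ℕ} {i : Fin n} {j : Fin (n + 1)}
    (h : i.castSucc < j) : i.castSucc.succ.succAbove j = j.succ :=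
  Fin.succAbove_of_le_castSucc _ _ (by simpa [Fin.le_def, Fin.lt_def] using h)

theorem Fin.predAbove_castSucc_succ_of_castSucc_lt {n : ℕ} {i : Fin n} {j : Fin (n + 1)}
    (h : i.castSucc < j) : j.predAbove i.castSucc.succ = i.succ := by
  rw [Fin.predAbove_of_le_castSucc _ _ (by simpa [Fin.le_def, Fin.lt_def] using h)]
  rfl

theorem PiTensorProduct.subsingleton_of_subsingleton {R ι : Type*} [CommSemiring R]
    {s : ι → Type*} [∀ i, AddCommMonoid (s i)] [∀ i, Module R (s i)] (i : ι)
    [Subsingleton (s i)] : Subsingleton (⨂[R] i, s i) := by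
  refine subsingleton_of_forall_eq 0 fun z => ?_
  induction z using PiTensorProduct.induction_on with
  | smul_tprod r c => rw [(tprod R).map_coord_zero i (Subsingleton.elim _ _), smul_zero]
  | add z w hz hw => rw [hz, hw, add_zero]

namespace CoTHH

variable {k : Type*} [CommRing k] {C : Type*} [AddCommGroup C] [Module k C] {n : ℕ}

def insertAt (e : C) (n : ℕ) (p : Fin (n + 1)) :
    (⨂[k] (_ : Fin n), C) →ₗ[k] ⨂[k] (_ : Fin (n + 1)), C :=
  PiTensorProduct.lift
    (MultilinearMap.curryMid p (PiTensorProduct.tprod k (s := fun _ : Fin (n + 1) ↦ C)) e)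

@[simp]
theorem insertAt_tprod (e : C) (p : Fin (n + 1)) (c : Fin n → C) :
    insertAt e n p (PiTensorProduct.tprod k c) = PiTensorProduct.tprod k (p.insertNth e c) := by
  simp [insertAt]

@[simp]
theorem epsAt_tprod (ε : C →ₗ[k] k) (p : Fin (n + 1)) (c : Fin (n + 1) → C) :
    epsAt ε n p (PiTensorProduct.tprod k c) = ε (c p) • PiTensorProduct.tprod k (p.removeNth c) :=
  PiTensorProduct.lift.tprod c

theorem epsAt_insertAt_self (ε : C →ₗ[k] k) (e : C) (p : Fin (n + 1))
    (z : ⨂[k] (_ : Fin n), C) : epsAt ε n p (insertAt e n p z) = ε e • z := by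
  induction z using PiTensorProduct.induction_on with
  | smul_tprod r c => simp [smul_comm r (ε e)]
  | add z w hz hw => simp [hz, hw]

theorem epsAt_succAbove_comp_insertAt (ε : C →ₗ[k] k) (e : C) (p : Fin (n + 2))
    (q : Fin (n + 1)) :
    epsAt ε (n + 1) (p.succAbove q) ∘ₗ insertAt e (n + 1) p =
      insertAt e n (q.predAbove p) ∘ₗ epsAt ε n q := by
  ext c
  simp [Fin.removeNth_succAbove_insertNth]

theorem epsAt_comp_epsAt (ε : C →ₗ[k] k) (p : Fin (n + 2)) (q : Fin (n + 1)) :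
    epsAt ε n q ∘ₗ epsAt ε (n + 1) p =
      epsAt ε n (q.predAbove p) ∘ₗ epsAt ε (n + 1) (p.succAbove q) := by
  ext c
  simp only [LinearMap.compMultilinearMap_apply, LinearMap.comp_apply, epsAt_tprod, map_smul,
    smul_smul]
  have hp : (p.succAbove q).removeNth c (q.predAbove p) = c p :=
    congrArg c (Fin.succAbove_succAbove_predAbove p q)
  rw [Fin.removeNth_removeNth_eq_swap c q p, hp, mul_comm]
  rfl

theorem epsAt_succ_comp_insertAt_of_lt (ε : C →ₗ[k] k) (e : C) {i : Fin n} {j : Fin (n + 1)}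
    (h : i.castSucc < j) :
    epsAt ε (n + 1) j.succ ∘ₗ insertAt e (n + 1) i.castSucc.succ =
      insertAt e n i.succ ∘ₗ epsAt ε n j := by
  rw [← Fin.castSucc_succ_succAbove_of_castSucc_lt h, epsAt_succAbove_comp_insertAt,
    Fin.predAbove_castSucc_succ_of_castSucc_lt h]

theorem epsAt_comp_epsAt_of_lt (ε : C →ₗ[k] k) {i : Fin n} {j : Fin (n + 1)}
    (h : i.castSucc < j) :
    epsAt ε n j ∘ₗ epsAt ε (n + 1) i.castSucc.succ =
      epsAt ε n i.succ ∘ₗ epsAt ε (n + 1) j.succ := by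
  rw [epsAt_comp_epsAt, Fin.predAbove_castSucc_succ_of_castSucc_lt h,
    Fin.castSucc_succ_succAbove_of_castSucc_lt h]

/-- The matching condition `σ_i x_j = σ_{j-1} x_i` for `i < j`, where `σ_i = epsAt ε n i.succ`. -/
def IsMatchingFamily (ε : C →ₗ[k] k) (x : Fin (n + 1) → ⨂[k] (_ : Fin (n + 1)), C) : Prop :=
  ∀ (i : Fin n) (j : Fin (n + 1)), i.castSucc < j →
    epsAt ε n i.succ (x j) = epsAt ε n j (x i.castSucc)

namespace IsMatchingFamily

variable {ε : C →ₗ[k] k} {e : C} {x : Fin (n + 1) → ⨂[k] (_ : Fin (n + 1)), C}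

theorem exists_lift_of_le (hx : IsMatchingFamily ε x) (he : ε e = 1) (m : Fin (n + 1))
    (y : ⨂[k] (_ : Fin (n + 2)), C) (hy : ∀ j, m < j → epsAt ε (n + 1) j.succ y = x j) :
    ∃ y' : ⨂[k] (_ : Fin (n + 2)), C, ∀ j, m ≤ j → epsAt ε (n + 1) j.succ y' = x j := by
  refine ⟨y + insertAt e (n + 1) m.succ (x m - epsAt ε (n + 1) m.succ y), fun j hj => ?_⟩
  rcases hj.eq_or_lt with rfl | hlt
  · rw [map_add, epsAt_insertAt_self, he, one_smul, add_sub_cancel]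
  obtain ⟨i, rfl⟩ := Fin.exists_castSucc_eq.mpr (Fin.ne_last_of_lt hlt)
  have herr : epsAt ε n j (x i.castSucc - epsAt ε (n + 1) i.castSucc.succ y) = 0 := by
    rw [map_sub, ← hx i j hlt, ← LinearMap.comp_apply, epsAt_comp_epsAt_of_lt ε hlt,
      LinearMap.comp_apply, hy j hlt, sub_self]
  rw [map_add, hy j hlt, ← LinearMap.comp_apply, epsAt_succ_comp_insertAt_of_lt ε e hlt,
    LinearMap.comp_apply, herr, map_zero, add_zero]

theorem exists_lift (hx : IsMatchingFamily ε x) (he : ε e = 1) :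
    ∃ y : ⨂[k] (_ : Fin (n + 2)), C, ∀ j, epsAt ε (n + 1) j.succ y = x j := by
  have hlift : ∀ t ≤ n + 1, ∃ y : ⨂[k] (_ : Fin (n + 2)), C,
      ∀ j : Fin (n + 1), t ≤ j → epsAt ε (n + 1) j.succ y = x j := by
    intro t ht
    induction ht using Nat.decreasingInduction with
    | self => exact ⟨0, fun j hj => absurd hj (by omega)⟩
    | of_succ t ht ih =>
      obtain ⟨y, hy⟩ := ih
      exact hx.exists_lift_of_le he ⟨t, ht⟩ y fun j hj => hy j hj
  obtain ⟨y, hy⟩ := hlift 0 (Nat.zero_le _)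
  exact ⟨y, fun j => hy j (Nat.zero_le _)⟩

end IsMatchingFamily

theorem subsingleton_or_exists_eq_one_of_counit {k C : Type*} [Field k] [AddCommGroup C]
    [Module k C] (Δ : C →ₗ[k] C ⊗[k] C) (ε : C →ₗ[k] k)
    (hcounit_r : (TensorProduct.rid k C).toLinearMap ∘ₗ
        TensorProduct.map LinearMap.id ε ∘ₗ Δ = LinearMap.id) :
    Subsingleton C ∨ ∃ e, ε e = 1 := by
  by_cases hε : ε = 0
  · subst hε
    refine .inl (subsingleton_of_forall_eq 0 fun c => ?_)
    simpa using (LinearMap.congr_fun hcounit_r c).symm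
  · obtain ⟨c, hc⟩ := DFunLike.ne_iff.mp hε
    exact .inr ⟨(ε c)⁻¹ • c, by rw [map_smul, smul_eq_mul, inv_mul_cancel₀ hc]⟩

end CoTHH

/-- Let `k` be a field and `(C, Δ, ε)` any counital coassociative `k`-coalgebra.  Then for
every `n ≥ 0` the matching map `σ : coTHH^n(C) = C^{⊗(n+1)} → M_n(coTHH^•(C))`,
`y ↦ (σ_0 y, …, σ_{n-1} y)`, is surjective (so the cosimplicial cyclic cobar construction of
any counital coalgebra over a field is Reedy fibrant): every family `(x_0, …, x_{n-1})` in the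
matching object (i.e. satisfying `σ_i (x_j) = σ_{j-1} (x_i)` for `0 ≤ i < j ≤ n-1`;
note that `σ_i` and `σ_{j-1}` apply the counit in the `(i+1)`-st resp. `j`-th tensor factor)
is of the form `(σ_0 y, …, σ_{n-1} y)`. -/
theorem coTHH_matching_surjective_of_field (k : Type*) [Field k] (C : Type*) [AddCommGroup C]
    [Module k C] (Δ : C →ₗ[k] C ⊗[k] C) (ε : C →ₗ[k] k)
    (hcounit_r : (TensorProduct.rid k C).toLinearMap ∘ₗ
        TensorProduct.map LinearMap.id ε ∘ₗ Δ = LinearMap.id)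
    (n : ℕ) (x : Fin n → ⨂[k] (_ : Fin n), C)
    (hx : ∀ i j : Fin n, (h : (i : ℕ) < (j : ℕ)) →
      epsAt' ε n ⟨(i : ℕ) + 1, by omega⟩ (x j) = epsAt' ε n j (x i)) :
    ∃ y : ⨂[k] (_ : Fin (n + 1)), C, ∀ i : Fin n, epsAt ε n i.succ y = x i := by
  cases n with
  | zero => exact ⟨0, fun i => i.elim0⟩
  | succ n =>
    have hmatch : IsMatchingFamily ε x := fun i j h => hx i.castSucc j h
    rcases subsingleton_or_exists_eq_one_of_counit Δ ε hcounit_r with hC | ⟨e, he⟩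
    · have := PiTensorProduct.subsingleton_of_subsingleton (R := k)
        (s := fun _ : Fin (n + 1) ↦ C) 0
      exact ⟨0, fun i => Subsingleton.elim _ _⟩
    · exact hmatch.exists_lift he
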